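/- arXiv:1406.1979 — 10 statements merged into one kernel-verified Lean document; each statement's English description precedes it below -/
import Mathlib

section
/- Let (S,·) be a semigroup and f : S → ℂ a function. If there exists ε > 0 such that |f(x·y) − f(x)f(y)| ≤ ε for all x, y ∈ S, then either f is bounded (specifically |f(x)| ≤ (1 + √(1+4ε))/2 for all x ∈ S) or f satisfies f(x·y) = f(x)f(y) for all x, y ∈ S. -/
/-!
Let `β = (1 + √(1 + 4ε)) / 2`, the positive root of `β² = β + ε`. If `‖f z‖ > β`, then squaring
at least doubles the excess `‖f z‖ - β`, so `f` is unbounded along `z, z², (z²)², …`.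
For unbounded `f`, associativity writes `(f (x y) - f x f y) f w` as a combination of the defects
at `(x, y w)`, `(x y, w)` and `(y, w)`, whence `‖f (x y) - f x f y‖ ‖f w‖ ≤ 2ε + ε ‖f x‖` for
every `w`; letting `‖f w‖` grow forces `f (x y) = f x f y`.
-/

section

variable {S 𝕜 : Type*} [Semigroup S] [NormedDivisionRing 𝕜] {f : S → 𝕜} {ε β : ℝ}

theorem norm_map_mul_sub_mul_mul_norm_le (h : ∀ x y : S, ‖f (x * y) - f x * f y‖ ≤ ε)
    (x y w : S) : ‖f (x * y) - f x * f y‖ * ‖f w‖ ≤ 2 * ε + ‖f x‖ * ε := by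
  have hdecomp : (f (x * y) - f x * f y) * f w =
      (f (x * (y * w)) - f x * f (y * w)) - (f (x * y * w) - f (x * y) * f w)
        + f x * (f (y * w) - f y * f w) := by
    rw [mul_assoc x y w]; noncomm_ring
  calc ‖f (x * y) - f x * f y‖ * ‖f w‖ = ‖(f (x * y) - f x * f y) * f w‖ := (norm_mul _ _).symm
    _ ≤ ‖f (x * (y * w)) - f x * f (y * w)‖ + ‖f (x * y * w) - f (x * y) * f w‖
          + ‖f x‖ * ‖f (y * w) - f y * f w‖ := by
        rw [hdecomp, ← norm_mul]; exact (norm_add_le _ _).trans (by gcongr; exact norm_sub_le _ _)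
    _ ≤ 2 * ε + ‖f x‖ * ε := by
        linarith [h x (y * w), h (x * y) w, mul_le_mul_of_nonneg_left (h y w) (norm_nonneg (f x))]

theorem map_mul_of_not_bddAbove (h : ∀ x y : S, ‖f (x * y) - f x * f y‖ ≤ ε)
    (hf : ¬BddAbove (Set.range fun x => ‖f x‖)) (x y : S) : f (x * y) = f x * f y := by
  by_contra hne
  have hd : 0 < ‖f (x * y) - f x * f y‖ := norm_pos_iff.mpr (sub_ne_zero.mpr hne)
  refine hf ⟨(2 * ε + ‖f x‖ * ε) / ‖f (x * y) - f x * f y‖, ?_⟩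
  rintro _ ⟨w, rfl⟩
  rw [le_div_iff₀ hd, mul_comm]
  exact norm_map_mul_sub_mul_mul_norm_le h x y w

theorem two_mul_sub_le_norm_map_mul_self_sub {s : S} (hs : ‖f (s * s) - f s * f s‖ ≤ ε)
    (hβ : 1 ≤ β) (hβε : β ^ 2 = β + ε) (hβs : β ≤ ‖f s‖) :
    2 * (‖f s‖ - β) ≤ ‖f (s * s)‖ - β := by
  have hsq : ‖f s‖ ^ 2 - ε ≤ ‖f (s * s)‖ := by
    have := norm_sub_norm_le (f s * f s) (f (s * s))
    rw [norm_sub_rev, norm_mul] at this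
    nlinarith
  nlinarith

theorem pow_two_mul_sub_le_norm_map_iterate_mul_self
    (h : ∀ x y : S, ‖f (x * y) - f x * f y‖ ≤ ε) (hβ : 1 ≤ β) (hβε : β ^ 2 = β + ε) {z : S}
    (hz : β ≤ ‖f z‖) (n : ℕ) : 2 ^ n * (‖f z‖ - β) ≤ ‖f ((fun s => s * s)^[n] z)‖ - β := by
  induction n with
  | zero => simp
  | succ n ih =>
    have hpos : 0 ≤ 2 ^ n * (‖f z‖ - β) := mul_nonneg (by positivity) (sub_nonneg.mpr hz)
    rw [Function.iterate_succ_apply', pow_succ, mul_comm _ 2, mul_assoc]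
    exact (mul_le_mul_of_nonneg_left ih zero_le_two).trans
      (two_mul_sub_le_norm_map_mul_self_sub (h _ _) hβ hβε (by linarith))

theorem not_bddAbove_of_lt_norm (h : ∀ x y : S, ‖f (x * y) - f x * f y‖ ≤ ε) (hβ : 1 ≤ β)
    (hβε : β ^ 2 = β + ε) {z : S} (hz : β < ‖f z‖) :
    ¬BddAbove (Set.range fun x => ‖f x‖) := by
  rintro ⟨C, hC⟩
  obtain ⟨n, hn⟩ := pow_unbounded_of_one_lt ((C - β) / (‖f z‖ - β)) one_lt_two
  rw [div_lt_iff₀ (sub_pos.mpr hz)] at hn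
  have := pow_two_mul_sub_le_norm_map_iterate_mul_self h hβ hβε hz.le n
  linarith [hC ⟨(fun s => s * s)^[n] z, rfl⟩]

end

theorem stmt_0_general {S : Type*} [Semigroup S] (f : S → ℂ) (ε : ℝ)
    (h : ∀ x y : S, ‖f (x * y) - f x * f y‖ ≤ ε) :
    (∀ x : S, ‖f x‖ ≤ (1 + Real.sqrt (1 + 4 * ε)) / 2) ∨
      (∀ x y : S, f (x * y) = f x * f y) := by
  set β := (1 + Real.sqrt (1 + 4 * ε)) / 2 with hβdef
  by_cases hbdd : ∀ x : S, ‖f x‖ ≤ β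
  · exact Or.inl hbdd
  obtain ⟨z, hz⟩ := not_forall.mp hbdd
  rw [not_le] at hz
  have hε : 0 ≤ ε := (norm_nonneg _).trans (h z z)
  have hsqrt : Real.sqrt (1 + 4 * ε) ^ 2 = 1 + 4 * ε := Real.sq_sqrt (by linarith)
  have hβ : 1 ≤ β := by
    have : 1 ≤ Real.sqrt (1 + 4 * ε) := Real.one_le_sqrt.mpr (by linarith)
    rw [hβdef]; linarith
  have hβε : β ^ 2 = β + ε := by rw [hβdef]; linear_combination hsqrt / 4
  exact Or.inr (map_mul_of_not_bddAbove h (not_bddAbove_of_lt_norm h hβ hβε hz))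

theorem stmt_0 {S : Type*} [Semigroup S] (f : S → ℂ) (ε : ℝ) (hε : 0 < ε)
    (h : ∀ x y : S, ‖f (x * y) - f x * f y‖ ≤ ε) :
    (∀ x : S, ‖f x‖ ≤ (1 + Real.sqrt (1 + 4 * ε)) / 2) ∨
      (∀ x y : S, f (x * y) = f x * f y) :=
  stmt_0_general f ε h
end

section
/- Let (S,·) be a semigroup, f : S → ℂ a function, ε > 0, and a ∈ S an element with |f(a)| > 1 such that |f(a·y) − f(a)f(y)| ≤ ε for all y ∈ S. Then there exists a unique function T : S → ℂ such that T(a·y) = f(a)T(y) for all y ∈ S and |f(y) − T(y)| ≤ ε/(|f(a)| − 1) for all y ∈ S. -/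
/-!
Only the self-map `y ↦ a * y` of `S` and the scalar `c = f a` matter. Since
`f (a * y) ≈ c f(y)` up to `ε`, consecutive terms of `f (aⁿ y) / cⁿ` differ by at most
`ε / |c|ⁿ⁺¹`, so the sequence converges geometrically to some `T y`, which satisfies
`T (a y) = c T y` and stays within `ε / (|c| - 1)` of `f y`. Any two such `T` differ by a
bounded function `D` with `D (aⁿ y) = cⁿ D y`; as `|c| > 1` this forces `D = 0`.
-/

section Stability

variable {X 𝕜 : Type*} [NormedField 𝕜] {φ : X → X} {c : 𝕜}

theorem eq_zero_of_semiconj_mul_of_norm_le {D : X → 𝕜} (hc : 1 < ‖c‖)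
    (hD : Function.Semiconj D φ (c * ·)) {M : ℝ} (hM : ∀ y, ‖D y‖ ≤ M) : D = 0 := by
  funext y
  have hpow : ∀ n : ℕ, ‖c‖ ^ n * ‖D y‖ ≤ M := fun n => by
    simpa [hD.iterate_right n y, mul_left_iterate_apply] using hM (φ^[n] y)
  by_contra hne
  have hpos : 0 < ‖D y‖ := norm_pos_iff.mpr hne
  obtain ⟨n, hn⟩ := pow_unbounded_of_one_lt (M / ‖D y‖) hc
  exact (hpow n).not_gt ((div_lt_iff₀ hpos).mp hn)

theorem dist_div_pow_iterate_succ_le {f : X → 𝕜} {ε : ℝ} (hc : c ≠ 0)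
    (hf : ∀ y, ‖f (φ y) - c * f y‖ ≤ ε) (y : X) (n : ℕ) :
    dist (f (φ^[n] y) / c ^ n) (f (φ^[n + 1] y) / c ^ (n + 1)) ≤ ε / ‖c‖ * (1 / ‖c‖) ^ n := by
  have hdiff : f (φ^[n] y) / c ^ n - f (φ^[n + 1] y) / c ^ (n + 1)
      = -((f (φ (φ^[n] y)) - c * f (φ^[n] y)) / c ^ (n + 1)) := by
    rw [Function.iterate_succ_apply']
    field_simp
    ring
  calc dist (f (φ^[n] y) / c ^ n) (f (φ^[n + 1] y) / c ^ (n + 1))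
      = ‖f (φ (φ^[n] y)) - c * f (φ^[n] y)‖ / ‖c‖ ^ (n + 1) := by
        rw [dist_eq_norm, hdiff, norm_neg, norm_div, norm_pow]
    _ ≤ ε / ‖c‖ ^ (n + 1) := by gcongr; exact hf _
    _ = ε / ‖c‖ * (1 / ‖c‖) ^ n := by
        rw [div_pow, one_pow, div_mul_div_comm, mul_one, ← pow_succ']

theorem exists_semiconj_mul_norm_sub_le [CompleteSpace 𝕜] {f : X → 𝕜} {ε : ℝ} (hc : 1 < ‖c‖)
    (hf : ∀ y, ‖f (φ y) - c * f y‖ ≤ ε) :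
    ∃ T : X → 𝕜, Function.Semiconj T φ (c * ·) ∧ ∀ y, ‖f y - T y‖ ≤ ε / (‖c‖ - 1) := by
  have hc₀ : c ≠ 0 := norm_pos_iff.mp (one_pos.trans hc)
  have hratio : 1 / ‖c‖ < 1 := (div_lt_one (one_pos.trans hc)).mpr hc
  have hstep := dist_div_pow_iterate_succ_le hc₀ hf
  choose T hT using fun y =>
    cauchySeq_tendsto_of_complete (cauchySeq_of_le_geometric _ _ hratio (hstep y))
  refine ⟨T, fun y => ?_, fun y => ?_⟩
  · have hshift : (fun n => f (φ^[n] (φ y)) / c ^ n)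
        = fun n => c * (f (φ^[n + 1] y) / c ^ (n + 1)) := by
      funext n
      rw [← Function.iterate_succ_apply, pow_succ']
      field_simp
    refine tendsto_nhds_unique (hT (φ y)) ?_
    rw [hshift]
    exact ((hT y).comp (Filter.tendsto_add_atTop_nat 1)).const_mul c
  · have hdist := dist_le_of_le_geometric_of_tendsto₀ _ _ hratio (hstep y) (hT y)
    have hsum : ε / ‖c‖ / (1 - 1 / ‖c‖) = ε / (‖c‖ - 1) := by
      have : ‖c‖ ≠ 0 := norm_ne_zero_iff.mpr hc₀
      field_simp
    simpa only [Function.iterate_zero_apply, pow_zero, div_one, dist_eq_norm, hsum] using hdist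

end Stability

theorem stmt_1_general {S : Type*} [Semigroup S] (f : S → ℂ) (ε : ℝ)
    (a : S) (ha : 1 < ‖f a‖)
    (h : ∀ y : S, ‖f (a * y) - f a * f y‖ ≤ ε) :
    ∃! T : S → ℂ, (∀ y : S, T (a * y) = f a * T y) ∧
      (∀ y : S, ‖f y - T y‖ ≤ ε / (‖f a‖ - 1)) := by
  obtain ⟨T, hTa, hTf⟩ := exists_semiconj_mul_norm_sub_le (φ := (a * ·)) ha h
  refine ⟨T, ⟨hTa, hTf⟩, fun T' ⟨hT'a, hT'f⟩ => ?_⟩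
  have hD : Function.Semiconj (T' - T) (a * ·) (f a * ·) := fun y => by
    simp only [Pi.sub_apply, hT'a, hTa.eq, mul_sub]
  have hbound : ∀ y, ‖(T' - T) y‖ ≤ 2 * (ε / (‖f a‖ - 1)) := fun y =>
    calc ‖T' y - T y‖ = dist (T' y) (T y) := (dist_eq_norm _ _).symm
      _ ≤ dist (f y) (T' y) + dist (f y) (T y) := dist_triangle_left _ _ _
      _ ≤ 2 * (ε / (‖f a‖ - 1)) := by
          rw [dist_eq_norm, dist_eq_norm]
          linarith [hT'f y, hTf y]
  exact sub_eq_zero.mp (eq_zero_of_semiconj_mul_of_norm_le ha hD hbound)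

theorem stmt_1 {S : Type*} [Semigroup S] (f : S → ℂ) (ε : ℝ) (hε : 0 < ε)
    (a : S) (ha : 1 < ‖f a‖)
    (h : ∀ y : S, ‖f (a * y) - f a * f y‖ ≤ ε) :
    ∃! T : S → ℂ, (∀ y : S, T (a * y) = f a * T y) ∧
      (∀ y : S, ‖f y - T y‖ ≤ ε / (‖f a‖ - 1)) :=
  stmt_1_general f ε a ha h
end

section
/- Let (S,·) be a semigroup, f : S → ℂ, ε > 0, and a ∈ S with |f(a)| > 1 such that |f(x·y) − f(x)f(y)| ≤ ε for all x, y ∈ S. Let T(y) = lim_{n→∞} f(aⁿ·y)/f(a)ⁿ (this limit exists). Then T(x·y) = T(x)f(y) for all x, y ∈ S. -/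
open Filter Topology

theorem iterate_mul_left_mul {S : Type*} [Semigroup S] (a x y : S) (n : ℕ) :
    (a * ·)^[n] (x * y) = (a * ·)^[n] x * y := by
  induction n with
  | zero => rfl
  | succ n ih => simp only [Function.iterate_succ_apply', ih, mul_assoc]

theorem tendsto_div_pow_nhds_zero_of_norm_le {𝕜 : Type*} [NormedField 𝕜] {g : ℕ → 𝕜} {C : ℝ}
    (hg : ∀ n, ‖g n‖ ≤ C) {c : 𝕜} (hc : 1 < ‖c‖) :
    Tendsto (fun n => g n / c ^ n) atTop (𝓝 0) := by
  have hgeom : Tendsto (fun n : ℕ => C * ‖c‖⁻¹ ^ n) atTop (𝓝 0) := by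
    simpa using (tendsto_pow_atTop_nhds_zero_of_lt_one (by positivity)
      (inv_lt_one_of_one_lt₀ hc)).const_mul C
  refine squeeze_zero_norm (fun n => ?_) hgeom
  rw [norm_div, norm_pow, div_eq_mul_inv, ← inv_pow]
  exact mul_le_mul_of_nonneg_right (hg n) (by positivity)

theorem stmt_2_general {S : Type*} [Semigroup S] (f : S → ℂ) (ε : ℝ)
    (a : S) (ha : 1 < ‖f a‖)
    (h : ∀ x y : S, ‖f (x * y) - f x * f y‖ ≤ ε)
    (T : S → ℂ)
    (hT : ∀ y : S, Filter.Tendsto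
      (fun n : ℕ => f ((fun z => a * z)^[n] y) / (f a) ^ n) Filter.atTop (nhds (T y))) :
    ∀ x y : S, T (x * y) = T x * f y := by
  intro x y
  have hdefect : Tendsto (fun n : ℕ =>
      (f ((a * ·)^[n] x * y) - f ((a * ·)^[n] x) * f y) / f a ^ n) atTop (𝓝 0) :=
    tendsto_div_pow_nhds_zero_of_norm_le (fun n => h _ _) ha
  refine tendsto_nhds_unique (hT (x * y)) ?_
  simpa [iterate_mul_left_mul, sub_div, div_mul_eq_mul_div] using
    hdefect.add ((hT x).mul_const (f y))

theorem stmt_2 {S : Type*} [Semigroup S] (f : S → ℂ) (ε : ℝ) (hε : 0 < ε)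
    (a : S) (ha : 1 < ‖f a‖)
    (h : ∀ x y : S, ‖f (x * y) - f x * f y‖ ≤ ε)
    (T : S → ℂ)
    (hT : ∀ y : S, Filter.Tendsto
      (fun n : ℕ => f ((fun z => a * z)^[n] y) / (f a) ^ n) Filter.atTop (nhds (T y))) :
    ∀ x y : S, T (x * y) = T x * f y :=
  stmt_2_general f ε a ha h T hT
end

section
/- Let (S,·) be a commutative semigroup, B a complex Banach space, g : S → ℂ and ψ : S² → [0,∞) functions. Suppose f : S → B satisfies ‖f(x·y) − g(x)f(y)‖ ≤ ψ(x,y) for all x, y ∈ S, and there exists a ∈ S with |g(a)| > 1 and ψ(x, y·a) ≤ ψ(x,y) for all x, y ∈ S. Then there exists a function T : S → B with T(x·y) = g(x)T(y) for all x, y ∈ S and ‖f(y) − T(y)‖ ≤ ψ(a,y)/(|g(a)| − 1) for all y ∈ S. -/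
/-!
Write `c = g a` and `σ y = y * a`. Since `f (σ y) ≈ c • f y` up to `ψ a y`, and `ψ a` does not
increase along `σ`, consecutive terms of `n ↦ c⁻¹ ^ n • f (σ^[n] y)` differ by at most
`ψ a y · ‖c‖⁻¹ ^ (n + 1)`. The sequence is therefore Cauchy, its limit `T y` lies within the
geometric sum `ψ a y / (‖c‖ - 1)` of `f y`, and `T` satisfies `T (x * y) = g x • T y` exactly because
`σ^[n]` commutes with left multiplication, so the defect `ψ x y` is damped by `‖c‖⁻¹ ^ n`.
-/

open Filter Topology

section RescaledOrbit

variable {𝕜 X B : Type*} [NormedField 𝕜] [NormedAddCommGroup B] [NormedSpace 𝕜 B]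

def rescaledOrbit (c : 𝕜) (σ : X → X) (f : X → B) (y : X) (n : ℕ) : B :=
  c⁻¹ ^ n • f (σ^[n] y)

noncomputable def orbitLimit [CompleteSpace B] (c : 𝕜) (σ : X → X) (f : X → B) (y : X) : B :=
  limUnder atTop (rescaledOrbit c σ f y)

variable {c : 𝕜} {σ : X → X} {f : X → B} {δ : X → ℝ}

@[simp]
lemma rescaledOrbit_zero (y : X) : rescaledOrbit c σ f y 0 = f y := by
  simp [rescaledOrbit]

lemma apply_iterate_le_of_apply_map_le (hδ : ∀ y, δ (σ y) ≤ δ y) (y : X) (n : ℕ) :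
    δ (σ^[n] y) ≤ δ y :=
  antitone_nat_of_succ_le (f := fun n => δ (σ^[n] y))
    (fun n => by simpa only [Function.iterate_succ_apply'] using hδ _) (Nat.zero_le n)

lemma dist_rescaledOrbit_succ_le (hc : c ≠ 0) (hδ : ∀ y, δ (σ y) ≤ δ y)
    (hf : ∀ y, ‖f (σ y) - c • f y‖ ≤ δ y) (y : X) (n : ℕ) :
    dist (rescaledOrbit c σ f y n) (rescaledOrbit c σ f y (n + 1)) ≤
      δ y * ‖c‖⁻¹ * ‖c‖⁻¹ ^ n := by
  have hdiff : rescaledOrbit c σ f y n - rescaledOrbit c σ f y (n + 1) =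
      c⁻¹ ^ (n + 1) • -(f (σ (σ^[n] y)) - c • f (σ^[n] y)) := by
    simp only [rescaledOrbit, Function.iterate_succ_apply', neg_sub, smul_sub, smul_smul,
      pow_succ, mul_assoc, inv_mul_cancel₀ hc, mul_one]
  rw [dist_eq_norm, hdiff, norm_smul, norm_neg, norm_pow, norm_inv]
  calc ‖c‖⁻¹ ^ (n + 1) * ‖f (σ (σ^[n] y)) - c • f (σ^[n] y)‖
      ≤ ‖c‖⁻¹ ^ (n + 1) * δ y := by
        gcongr
        exact (hf _).trans (apply_iterate_le_of_apply_map_le hδ y n)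
    _ = δ y * ‖c‖⁻¹ * ‖c‖⁻¹ ^ n := by ring

variable [CompleteSpace B]

lemma tendsto_orbitLimit (hc : 1 < ‖c‖) (hδ : ∀ y, δ (σ y) ≤ δ y)
    (hf : ∀ y, ‖f (σ y) - c • f y‖ ≤ δ y) (y : X) :
    Tendsto (rescaledOrbit c σ f y) atTop (𝓝 (orbitLimit c σ f y)) :=
  (cauchySeq_of_le_geometric _ _ (inv_lt_one_of_one_lt₀ hc)
    (dist_rescaledOrbit_succ_le (norm_pos_iff.mp (one_pos.trans hc)) hδ hf y)).tendsto_limUnder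

lemma norm_sub_orbitLimit_le (hc : 1 < ‖c‖) (hδ : ∀ y, δ (σ y) ≤ δ y)
    (hf : ∀ y, ‖f (σ y) - c • f y‖ ≤ δ y) (y : X) :
    ‖f y - orbitLimit c σ f y‖ ≤ δ y / (‖c‖ - 1) := by
  have hbound := dist_le_of_le_geometric_of_tendsto₀ _ _ (inv_lt_one_of_one_lt₀ hc)
    (dist_rescaledOrbit_succ_le (norm_pos_iff.mp (one_pos.trans hc)) hδ hf y)
    (tendsto_orbitLimit hc hδ hf y)
  have hsum : δ y * ‖c‖⁻¹ / (1 - ‖c‖⁻¹) = δ y / (‖c‖ - 1) := by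
    have : ‖c‖ - 1 ≠ 0 := (sub_pos.mpr hc).ne'
    field_simp
  rwa [rescaledOrbit_zero, dist_eq_norm, hsum] at hbound

end RescaledOrbit

section Semigroup

variable {S 𝕜 B : Type*} [CommSemigroup S] [NormedField 𝕜] [NormedAddCommGroup B]
  [NormedSpace 𝕜 B] {g : S → 𝕜} {ψ : S → S → ℝ} {f : S → B} {a : S}

lemma norm_rescaledOrbit_mul_sub_smul_le (h : ∀ x y, ‖f (x * y) - g x • f y‖ ≤ ψ x y)
    (haψ : ∀ x y, ψ x (y * a) ≤ ψ x y) (x y : S) (n : ℕ) :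
    ‖rescaledOrbit (g a) (· * a) f (x * y) n - g x • rescaledOrbit (g a) (· * a) f y n‖ ≤
      ψ x y * ‖g a‖⁻¹ ^ n := by
  have hcomm : Function.Commute (x * ·) (· * a) := fun y => (mul_assoc x y a).symm
  rw [rescaledOrbit, rescaledOrbit, ← hcomm.iterate_right n y, smul_comm (g x), ← smul_sub,
    norm_smul, norm_pow, norm_inv, mul_comm]
  gcongr
  exact (h _ _).trans (apply_iterate_le_of_apply_map_le (haψ x) y n)

variable [CompleteSpace B]

lemma orbitLimit_mul (h : ∀ x y, ‖f (x * y) - g x • f y‖ ≤ ψ x y) (ha : 1 < ‖g a‖)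
    (haψ : ∀ x y, ψ x (y * a) ≤ ψ x y) (x y : S) :
    orbitLimit (g a) (· * a) f (x * y) = g x • orbitLimit (g a) (· * a) f y := by
  have hf : ∀ y, ‖f (y * a) - g a • f y‖ ≤ ψ a y := fun y => mul_comm y a ▸ h a y
  have hdefect : Tendsto (fun n => rescaledOrbit (g a) (· * a) f (x * y) n -
      g x • rescaledOrbit (g a) (· * a) f y n) atTop (𝓝 0) := by
    refine squeeze_zero_norm (norm_rescaledOrbit_mul_sub_smul_le h haψ x y) ?_
    simpa using (tendsto_pow_atTop_nhds_zero_of_lt_one (by positivity)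
      (inv_lt_one_of_one_lt₀ ha)).const_mul (ψ x y)
  refine tendsto_nhds_unique (tendsto_orbitLimit ha (haψ a) hf (x * y)) ?_
  simpa using hdefect.add ((tendsto_orbitLimit ha (haψ a) hf y).const_smul (g x))

end Semigroup

theorem stmt_3_general {S : Type*} [CommSemigroup S] {B : Type*} [NormedAddCommGroup B]
    [NormedSpace ℂ B] [CompleteSpace B]
    (g : S → ℂ) (ψ : S → S → ℝ)
    (f : S → B) (h : ∀ x y : S, ‖f (x * y) - g x • f y‖ ≤ ψ x y)
    (a : S) (ha : 1 < ‖g a‖)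
    (haψ : ∀ x y : S, ψ x (y * a) ≤ ψ x y) :
    ∃ T : S → B, (∀ x y : S, T (x * y) = g x • T y) ∧
      (∀ y : S, ‖f y - T y‖ ≤ ψ a y / (‖g a‖ - 1)) :=
  ⟨orbitLimit (g a) (· * a) f, orbitLimit_mul h ha haψ,
    norm_sub_orbitLimit_le ha (haψ a) fun y => mul_comm y a ▸ h a y⟩

theorem stmt_3 {S : Type*} [CommSemigroup S] {B : Type*} [NormedAddCommGroup B]
    [NormedSpace ℂ B] [CompleteSpace B]
    (g : S → ℂ) (ψ : S → S → ℝ) (hψ : ∀ x y : S, 0 ≤ ψ x y)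
    (f : S → B) (h : ∀ x y : S, ‖f (x * y) - g x • f y‖ ≤ ψ x y)
    (a : S) (ha : 1 < ‖g a‖)
    (haψ : ∀ x y : S, ψ x (y * a) ≤ ψ x y) :
    ∃ T : S → B, (∀ x y : S, T (x * y) = g x • T y) ∧
      (∀ y : S, ‖f y - T y‖ ≤ ψ a y / (‖g a‖ - 1)) :=
  stmt_3_general g ψ f h a ha haψ
end

section
/- Let (S,+) be a commutative semigroup, E a complex normed space, and ψ : S² → [0,∞). Suppose f : S → E satisfies ‖f(x+y) − f(x) − f(y)‖ ≤ ψ(x,y) for all x, y ∈ S, and that for all fixed x₀, y₀, x, y ∈ S: (i) lim_{n→∞} (1/n)∑_{i=0}^{n−1} ψ(x + i·x₀, x₀) = 0, and (ii) lim_{n→∞} (1/n) ψ(x + n·x₀, y + n·y₀) = 0. Then f(x+y) = f(x) + f(y) for all x, y ∈ S. -/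
/-!
Write `T_a^[n] x` for `x` with `a` added `n` times and `D = f (x + y) - f x - f y`. Telescoping
the Cauchy difference along the orbit gives
`‖f (T_a^[n] x) - f x - n • f a‖ ≤ ∑_{i<n} ψ (T_a^[i] x) a`. Combining this for the orbits of
`x + y`, `x` and `y`, all starting at their own increment, and using
`T_{x+y}^[n] (x + y) = T_x^[n] x + T_y^[n] y`, one gets
`n ‖D‖ ≤ ψ (T_x^[n] x) (T_y^[n] y) + (three orbit sums) + ‖D‖`.
Dividing by `n`, every term on the right tends to `0` by the two averaging conditions, so `D = 0`.
-/

open Filter Finset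

lemma iterate_add_right_add {S : Type*} [AddCommSemigroup S] (a b x y : S) (n : ℕ) :
    (fun z => z + (a + b))^[n] (x + y) = (fun z => z + a)^[n] x + (fun z => z + b)^[n] y := by
  induction n with
  | zero => rfl
  | succ n ih => simp only [Function.iterate_succ_apply', ih, add_add_add_comm]

lemma nonpos_of_natCast_mul_le_add {a : ℝ} {b : ℕ → ℝ} (hle : ∀ n : ℕ, n * a ≤ b n + a)
    (hb : Tendsto (fun n : ℕ => (1 / (n : ℝ)) * b n) atTop (nhds 0)) : a ≤ 0 := by
  have hlim : Tendsto (fun n : ℕ => (1 / (n : ℝ)) * b n + (1 / (n : ℝ)) * a) atTop (nhds 0) := by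
    simpa using hb.add (tendsto_one_div_atTop_nhds_zero_nat.mul_const a)
  refine ge_of_tendsto hlim ?_
  filter_upwards [eventually_ge_atTop 1] with n hn
  have hn : (0 : ℝ) < n := by exact_mod_cast hn
  rw [← mul_add, one_div, le_inv_mul_iff₀ hn]
  exact hle n

section CauchyDifference

variable {S E : Type*} [AddCommSemigroup S] [NormedAddCommGroup E] {f : S → E} {ψ : S → S → ℝ}

lemma norm_apply_iterate_add_sub_le (h : ∀ x y : S, ‖f (x + y) - f x - f y‖ ≤ ψ x y)
    (a x : S) (n : ℕ) :
    ‖f ((fun z => z + a)^[n] x) - f x - n • f a‖ ≤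
      ∑ i ∈ range n, ψ ((fun z => z + a)^[i] x) a := by
  induction n with
  | zero => simp
  | succ n ih =>
    set u := (fun z => z + a)^[n] x
    rw [Function.iterate_succ_apply', sum_range_succ]
    calc ‖f (u + a) - f x - (n + 1) • f a‖
        = ‖(f u - f x - n • f a) + (f (u + a) - f u - f a)‖ := by
          rw [succ_nsmul]; congr 1; abel
      _ ≤ ‖f u - f x - n • f a‖ + ‖f (u + a) - f u - f a‖ := norm_add_le _ _
      _ ≤ _ := add_le_add ih (h u a)

lemma natCast_mul_norm_cauchyDiff_le [NormedSpace ℝ E] (h : ∀ x y : S, ‖f (x + y) - f x - f y‖ ≤ ψ x y)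
    (x y : S) (n : ℕ) :
    n * ‖f (x + y) - f x - f y‖ ≤
      (ψ ((fun z => z + x)^[n] x) ((fun z => z + y)^[n] y)
        + ∑ i ∈ range n, ψ ((fun z => z + (x + y))^[i] (x + y)) (x + y)
        + ∑ i ∈ range n, ψ ((fun z => z + x)^[i] x) x
        + ∑ i ∈ range n, ψ ((fun z => z + y)^[i] y) y)
      + ‖f (x + y) - f x - f y‖ := by
  set X := (fun z => z + x)^[n] x
  set Y := (fun z => z + y)^[n] y
  have hXY : (fun z => z + (x + y))^[n] (x + y) = X + Y := iterate_add_right_add x y x y n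
  have hsplit : n • (f (x + y) - f x - f y)
      = (f (X + Y) - f X - f Y) - (f (X + Y) - f (x + y) - n • f (x + y))
        + (f X - f x - n • f x) + (f Y - f y - n • f y) - (f (x + y) - f x - f y) := by
    simp only [nsmul_sub]; abel
  rw [← nsmul_eq_mul, ← RCLike.norm_nsmul ℝ, hsplit]
  have hxy := norm_apply_iterate_add_sub_le h (x + y) (x + y) n
  rw [hXY] at hxy
  have hx := norm_apply_iterate_add_sub_le h x x n
  have hy := norm_apply_iterate_add_sub_le h y y n
  have hψ := h X Y
  refine (norm_sub_le _ _).trans (add_le_add ?_ le_rfl)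
  refine (norm_add_le _ _).trans (add_le_add ?_ hy)
  refine (norm_add_le _ _).trans (add_le_add ?_ hx)
  exact (norm_sub_le _ _).trans (add_le_add hψ hxy)

end CauchyDifference

theorem stmt_10_general {S : Type*} [AddCommSemigroup S] {E : Type*} [NormedAddCommGroup E]
    [NormedSpace ℂ E]
    (ψ : S → S → ℝ)
    (f : S → E) (h : ∀ x y : S, ‖f (x + y) - f x - f y‖ ≤ ψ x y)
    (h1 : ∀ x₀ x : S, Filter.Tendsto
      (fun n : ℕ => (1 / (n : ℝ)) * ∑ i ∈ Finset.range n, ψ ((fun z => z + x₀)^[i] x) x₀)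
      Filter.atTop (nhds 0))
    (h2 : ∀ x₀ y₀ x y : S, Filter.Tendsto
      (fun n : ℕ => (1 / (n : ℝ)) * ψ ((fun z => z + x₀)^[n] x) ((fun z => z + y₀)^[n] y))
      Filter.atTop (nhds 0)) :
    ∀ x y : S, f (x + y) = f x + f y := by
  intro x y
  have hlim := (((h2 x y x y).add (h1 (x + y) (x + y))).add (h1 x x)).add (h1 y y)
  simp only [← mul_add, add_zero] at hlim
  have hD := nonpos_of_natCast_mul_le_add (natCast_mul_norm_cauchyDiff_le h x y) hlim
  rw [← sub_eq_zero, ← sub_sub]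
  exact norm_le_zero_iff.mp hD

theorem stmt_10 {S : Type*} [AddCommSemigroup S] {E : Type*} [NormedAddCommGroup E]
    [NormedSpace ℂ E]
    (ψ : S → S → ℝ) (hψ : ∀ x y : S, 0 ≤ ψ x y)
    (f : S → E) (h : ∀ x y : S, ‖f (x + y) - f x - f y‖ ≤ ψ x y)
    (h1 : ∀ x₀ x : S, Filter.Tendsto
      (fun n : ℕ => (1 / (n : ℝ)) * ∑ i ∈ Finset.range n, ψ ((fun z => z + x₀)^[i] x) x₀)
      Filter.atTop (nhds 0))
    (h2 : ∀ x₀ y₀ x y : S, Filter.Tendsto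
      (fun n : ℕ => (1 / (n : ℝ)) * ψ ((fun z => z + x₀)^[n] x) ((fun z => z + y₀)^[n] y))
      Filter.atTop (nhds 0)) :
    ∀ x y : S, f (x + y) = f x + f y :=
  stmt_10_general ψ f h h1 h2
end

section
/- Let E₁, E₂ be complex normed spaces and J : E₁ → E₂ a function with J(0) = 0. Then ‖2J((x+y)/2) − J(x) − J(y)‖ → 0 as ‖x‖ + ‖y‖ → ∞ if and only if 2J((x+y)/2) = J(x) + J(y) for all x, y ∈ E₁. -/
/-!
Fix `x, y` and put `m = (x + y) / 2`. For any `w`, the Jensen defect at `(x, y)` is a fixed linear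
combination of the defects at `(x, w - x)`, `(y, w - y)`, `(m, w - m)` and `(w - x, w - y)`, and all
four pairs have large norm sum once `‖w‖` is large. The asymptotic hypothesis then bounds the
defect at `(x, y)` by a constant times any `ε > 0`.
-/

section JensenDefect

variable (𝕜 : Type*) {E F : Type*}

def jensenDefect [Field 𝕜] [AddCommGroup E] [Module 𝕜 E] [AddCommGroup F] [Module 𝕜 F]
    (J : E → F) (x y : E) : F :=
  (2 : 𝕜) • J ((2 : 𝕜)⁻¹ • (x + y)) - J x - J y

section Algebra

variable [Field 𝕜] [NeZero (2 : 𝕜)] [AddCommGroup E] [Module 𝕜 E] [AddCommGroup F] [Module 𝕜 F]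

theorem jensenDefect_self (J : E → F) (x : E) : jensenDefect 𝕜 J x x = 0 := by
  rw [jensenDefect, ← two_smul 𝕜 x, inv_smul_smul₀ two_ne_zero, two_smul, sub_sub, sub_self]

theorem jensenDefect_eq_combination (J : E → F) (x y w : E) :
    let m := (2 : 𝕜)⁻¹ • (x + y)
    jensenDefect 𝕜 J x y = jensenDefect 𝕜 J x (w - x) + jensenDefect 𝕜 J y (w - y)
      - (2 : 𝕜) • jensenDefect 𝕜 J m (w - m) - jensenDefect 𝕜 J (w - x) (w - y) := by
  intro m
  have hreflect : (2 : 𝕜)⁻¹ • ((w - x) + (w - y)) = w - m := by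
    rw [show (w - x) + (w - y) = (2 : 𝕜) • w - (x + y) by rw [two_smul]; abel, smul_sub,
      inv_smul_smul₀ two_ne_zero]
  simp only [jensenDefect, add_sub_cancel, hreflect]
  module

end Algebra

section Analysis

variable [NormedField 𝕜] [NeZero (2 : 𝕜)] [SeminormedAddCommGroup E] [NormedSpace 𝕜 E]
  [SeminormedAddCommGroup F] [NormedSpace 𝕜 F]

theorem norm_jensenDefect_le_of_far {J : E → F} {M ε : ℝ}
    (hfar : ∀ x y : E, M < ‖x‖ + ‖y‖ → ‖jensenDefect 𝕜 J x y‖ ≤ ε)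
    {x y w : E} (hw : M + ‖x‖ + ‖y‖ < ‖w‖) :
    ‖jensenDefect 𝕜 J x y‖ ≤ (3 + ‖(2 : 𝕜)‖) * ε := by
  set m := (2 : 𝕜)⁻¹ • (x + y)
  have hsplit (u : E) : ‖w‖ ≤ ‖u‖ + ‖w - u‖ := norm_le_norm_add_norm_sub' w u
  have hx := hfar x (w - x) (by linarith [hsplit x, norm_nonneg x, norm_nonneg y])
  have hy := hfar y (w - y) (by linarith [hsplit y, norm_nonneg x, norm_nonneg y])
  have hm := hfar m (w - m) (by linarith [hsplit m, norm_nonneg x, norm_nonneg y])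
  have hxy := hfar (w - x) (w - y)
    (by linarith [norm_sub_norm_le w x, norm_sub_norm_le w y, norm_nonneg w])
  rw [jensenDefect_eq_combination 𝕜 J x y w]
  calc _ ≤ ‖jensenDefect 𝕜 J x (w - x)‖ + ‖jensenDefect 𝕜 J y (w - y)‖
          + ‖(2 : 𝕜)‖ * ‖jensenDefect 𝕜 J m (w - m)‖ + ‖jensenDefect 𝕜 J (w - x) (w - y)‖ := by
        grw [norm_sub_le, norm_sub_le, norm_add_le, norm_smul]
    _ ≤ ε + ε + ‖(2 : 𝕜)‖ * ε + ε := by gcongr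
    _ = (3 + ‖(2 : 𝕜)‖) * ε := by ring

end Analysis

theorem jensenDefect_eq_zero_of_forall_far_le [NontriviallyNormedField 𝕜] [NeZero (2 : 𝕜)]
    [NormedAddCommGroup E] [NormedSpace 𝕜 E] [NormedAddCommGroup F] [NormedSpace 𝕜 F]
    (J : E → F)
    (h : ∀ ε : ℝ, 0 < ε → ∃ M : ℝ, ∀ x y : E, M < ‖x‖ + ‖y‖ → ‖jensenDefect 𝕜 J x y‖ ≤ ε)
    (x y : E) : jensenDefect 𝕜 J x y = 0 := by
  rcases subsingleton_or_nontrivial E with hE | hE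
  · rw [Subsingleton.elim x y, jensenDefect_self]
  have hC : 0 < 3 + ‖(2 : 𝕜)‖ := by positivity
  refine norm_le_zero_iff.mp (le_of_forall_pos_le_add fun δ hδ => ?_)
  obtain ⟨M, hM⟩ := h (δ / (3 + ‖(2 : 𝕜)‖)) (by positivity)
  obtain ⟨w, hw⟩ := NormedSpace.exists_lt_norm 𝕜 E (M + ‖x‖ + ‖y‖)
  calc _ ≤ (3 + ‖(2 : 𝕜)‖) * (δ / (3 + ‖(2 : 𝕜)‖)) := norm_jensenDefect_le_of_far 𝕜 hM hw
    _ = 0 + δ := by field_simp; ring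

end JensenDefect

theorem stmt_15_general {E₁ E₂ : Type*} [NormedAddCommGroup E₁] [NormedSpace ℂ E₁]
    [NormedAddCommGroup E₂] [NormedSpace ℂ E₂]
    (J : E₁ → E₂) :
    (∀ ε : ℝ, 0 < ε → ∃ M : ℝ, 0 < M ∧ ∀ x y : E₁, M < ‖x‖ + ‖y‖ →
      ‖(2 : ℂ) • J (((2 : ℂ)⁻¹) • (x + y)) - J x - J y‖ ≤ ε) ↔
    (∀ x y : E₁, (2 : ℂ) • J (((2 : ℂ)⁻¹) • (x + y)) = J x + J y) := by
  constructor
  · intro h x y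
    rw [← sub_eq_zero, ← sub_sub]
    exact jensenDefect_eq_zero_of_forall_far_le ℂ J
      (fun ε hε => (h ε hε).imp fun _ hM => hM.2) x y
  · intro h ε hε
    refine ⟨1, one_pos, fun x y _ => ?_⟩
    rw [h x y, sub_sub, sub_self, norm_zero]
    exact hε.le

theorem stmt_15 {E₁ E₂ : Type*} [NormedAddCommGroup E₁] [NormedSpace ℂ E₁]
    [NormedAddCommGroup E₂] [NormedSpace ℂ E₂]
    (J : E₁ → E₂) (hJ0 : J 0 = 0) :
    (∀ ε : ℝ, 0 < ε → ∃ M : ℝ, 0 < M ∧ ∀ x y : E₁, M < ‖x‖ + ‖y‖ →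
      ‖(2 : ℂ) • J (((2 : ℂ)⁻¹) • (x + y)) - J x - J y‖ ≤ ε) ↔
    (∀ x y : E₁, (2 : ℂ) • J (((2 : ℂ)⁻¹) • (x + y)) = J x + J y) :=
  stmt_15_general J
end

section
/- Let S be a nonempty set, B a complex Banach space, ρ : S → S, p : S → ℂ \ {0}, q : S → B, ψ : S → [0,∞), and 0 < L < 1 with ψ(ρ(x)) ≤ L·|p(ρ(x))|·ψ(x) for all x ∈ S. If f : S → B satisfies ‖f(ρ(x)) − p(x)f(x) − q(x)‖ ≤ ψ(x) for all x ∈ S, then there exists a unique function T : S → B with T(ρ(x)) = p(x)T(x) + q(x) for all x ∈ S and ‖f(x) − T(x)‖ ≤ ψ(x)/((1−L)|p(x)|) for all x ∈ S. -/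
/-!
Fixed point method: solving the equation for `T x` turns it into the fixed point equation
`T = J T` with `J g x = (p x)⁻¹ • (g (ρ x) - q x)`. The condition on `ψ` makes `J` an
`L`-contraction for the weighted sup-distance `inf {C | ∀ x, ‖g x - h x‖ ≤ C * ψ x / ‖p x‖}`, and
`f` moves by at most `1` under `J` in this distance. Hence the iterates `J^[n] f` converge
pointwise, geometrically, to a fixed point at distance at most `1 / (1 - L)` from `f`, and two
fixed points at finite distance coincide.
-/

open Filter Topology Function

theorem tendsto_pow_mul_mul_nhds_zero {L : ℝ} (hL0 : 0 ≤ L) (hL1 : L < 1) (C a : ℝ) :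
    Tendsto (fun n : ℕ => L ^ n * C * a) atTop (𝓝 0) := by
  simpa using ((tendsto_pow_atTop_nhds_zero_of_lt_one hL0 hL1).mul_const C).mul_const a

section WeightedContraction

variable {S E : Type*} [NormedAddCommGroup E]

/-- `J` is `L`-Lipschitz for the generalized distance `inf {C | ∀ y, ‖g y - h y‖ ≤ C * w y}`. -/
def IsWeightedContraction (J : (S → E) → S → E) (w : S → ℝ) (L : ℝ) : Prop :=
  ∀ ⦃C : ℝ⦄ ⦃g h : S → E⦄, 0 ≤ C → (∀ y, ‖g y - h y‖ ≤ C * w y) →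
    ∀ x, ‖J g x - J h x‖ ≤ L * C * w x

namespace IsWeightedContraction

variable {J : (S → E) → S → E} {w : S → ℝ} {L : ℝ}

theorem norm_iterate_sub_le (hJ : IsWeightedContraction J w L) (hL0 : 0 ≤ L) {C : ℝ}
    (hC : 0 ≤ C) {g h : S → E} (hgh : ∀ y, ‖g y - h y‖ ≤ C * w y) (n : ℕ) (x : S) :
    ‖J^[n] g x - J^[n] h x‖ ≤ L ^ n * C * w x := by
  induction n generalizing x with
  | zero => simpa using hgh x
  | succ n ih =>
    rw [iterate_succ_apply', iterate_succ_apply', pow_succ', mul_assoc L]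
    exact hJ (by positivity) ih x

theorem eq_of_isFixedPt (hJ : IsWeightedContraction J w L) (hL0 : 0 ≤ L) (hL1 : L < 1)
    {g h : S → E} (hg : IsFixedPt J g) (hh : IsFixedPt J h) {C : ℝ} (hC : 0 ≤ C)
    (hgh : ∀ y, ‖g y - h y‖ ≤ C * w y) : g = h := by
  funext x
  have hle : ∀ n : ℕ, ‖g x - h x‖ ≤ L ^ n * C * w x := fun n => by
    simpa only [iterate_fixed hg, iterate_fixed hh] using
      hJ.norm_iterate_sub_le hL0 hC hgh n x
  exact sub_eq_zero.mp <| norm_le_zero_iff.mp <|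
    ge_of_tendsto' (tendsto_pow_mul_mul_nhds_zero hL0 hL1 C (w x)) hle

theorem exists_isFixedPt [CompleteSpace E] (hJ : IsWeightedContraction J w L) (hL0 : 0 ≤ L)
    (hL1 : L < 1) {f : S → E} (hf : ∀ x, ‖J f x - f x‖ ≤ w x) :
    ∃ T, IsFixedPt J T ∧ ∀ x, ‖f x - T x‖ ≤ w x / (1 - L) := by
  have hstep : ∀ x n, dist (J^[n] f x) (J^[n + 1] f x) ≤ w x * L ^ n := fun x n => by
    rw [dist_comm, dist_eq_norm, iterate_succ_apply, mul_comm]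
    simpa using hJ.norm_iterate_sub_le hL0 zero_le_one (by simpa using hf) n x
  choose T hT using fun x =>
    cauchySeq_tendsto_of_complete (cauchySeq_of_le_geometric L (w x) hL1 (hstep x))
  have hdist : ∀ n x, ‖J^[n] f x - T x‖ ≤ L ^ n / (1 - L) * w x := fun n x => by
    rw [← dist_eq_norm, div_mul_eq_mul_div, mul_comm _ (w x)]
    exact dist_le_of_le_geometric_of_tendsto L (w x) hL1 (hstep x) (hT x) n
  refine ⟨T, funext fun x => ?_, fun x => by simpa [div_eq_inv_mul] using hdist 0 x⟩
  -- `J^[n + 1] f x` tends both to `T x` and, by the contraction estimate, to `J T x`.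
  have hJT : Tendsto (fun n => J^[n + 1] f x) atTop (𝓝 (J T x)) := by
    refine tendsto_iff_norm_sub_tendsto_zero.2 <| squeeze_zero (fun _ => norm_nonneg _)
      (fun n => ?_) (tendsto_pow_mul_mul_nhds_zero hL0 hL1 (L / (1 - L)) (w x))
    rw [iterate_succ_apply']
    refine (hJ (div_nonneg (pow_nonneg hL0 n) (by linarith)) (hdist n) x).trans_eq ?_
    ring
  exact tendsto_nhds_unique hJT ((hT x).comp (tendsto_add_atTop_nat 1))

theorem existsUnique_isFixedPt [CompleteSpace E] (hJ : IsWeightedContraction J w L)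
    (hL0 : 0 ≤ L) (hL1 : L < 1) {f : S → E} (hf : ∀ x, ‖J f x - f x‖ ≤ w x) :
    ∃! T, IsFixedPt J T ∧ ∀ x, ‖f x - T x‖ ≤ w x / (1 - L) := by
  obtain ⟨T, hTJ, hTf⟩ := hJ.exists_isFixedPt hL0 hL1 hf
  refine ⟨T, ⟨hTJ, hTf⟩, fun T' ⟨hT'J, hT'f⟩ => hJ.eq_of_isFixedPt hL0 hL1 hT'J hTJ
    (C := 2 / (1 - L)) (div_nonneg zero_le_two (by linarith)) fun y => ?_⟩
  calc ‖T' y - T y‖ ≤ ‖T' y - f y‖ + ‖f y - T y‖ := norm_sub_le_norm_sub_add_norm_sub _ _ _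
    _ ≤ w y / (1 - L) + w y / (1 - L) := by
        rw [norm_sub_rev]
        exact add_le_add (hT'f y) (hTf y)
    _ = 2 / (1 - L) * w y := by ring

end IsWeightedContraction

end WeightedContraction

section LinearFunctionalEquation

variable {S B : Type*} [NormedAddCommGroup B] [NormedSpace ℂ B]
  (ρ : S → S) (p : S → ℂ) (q : S → B)

noncomputable def linearFunEqOp (g : S → B) : S → B := fun x => (p x)⁻¹ • (g (ρ x) - q x)

variable {ρ p q}

theorem isFixedPt_linearFunEqOp_iff (hp : ∀ x, p x ≠ 0) {g : S → B} :
    IsFixedPt (linearFunEqOp ρ p q) g ↔ ∀ x, g (ρ x) = p x • g x + q x := by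
  simp only [IsFixedPt, funext_iff, linearFunEqOp, inv_smul_eq_iff₀ (hp _), sub_eq_iff_eq_add]

theorem norm_linearFunEqOp_sub_self_le (hp : ∀ x, p x ≠ 0) {ψ : S → ℝ} {f : S → B}
    (hf : ∀ x, ‖f (ρ x) - p x • f x - q x‖ ≤ ψ x) (x : S) :
    ‖linearFunEqOp ρ p q f x - f x‖ ≤ ψ x / ‖p x‖ := by
  have hsub : linearFunEqOp ρ p q f x - f x = (p x)⁻¹ • (f (ρ x) - p x • f x - q x) := by
    simp only [linearFunEqOp, smul_sub, inv_smul_smul₀ (hp x)]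
    abel
  rw [hsub, norm_smul, norm_inv, inv_mul_eq_div]
  exact div_le_div_of_nonneg_right (hf x) (norm_nonneg _)

theorem isWeightedContraction_linearFunEqOp (hp : ∀ x, p x ≠ 0) {ψ : S → ℝ} {L : ℝ}
    (hψ : ∀ x, ψ (ρ x) ≤ L * ‖p (ρ x)‖ * ψ x) :
    IsWeightedContraction (linearFunEqOp ρ p q) (fun x => ψ x / ‖p x‖) L := by
  intro C g h hC hgh x
  dsimp only at hgh ⊢
  have hweight : ψ (ρ x) / ‖p (ρ x)‖ ≤ L * ψ x := by
    rw [div_le_iff₀ (norm_pos_iff.2 (hp _))]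
    linarith [hψ x]
  have hsub : linearFunEqOp ρ p q g x - linearFunEqOp ρ p q h x =
      (p x)⁻¹ • (g (ρ x) - h (ρ x)) := by
    simp only [linearFunEqOp, ← smul_sub, sub_sub_sub_cancel_right]
  rw [hsub, norm_smul, norm_inv, inv_mul_eq_div, ← mul_div_assoc]
  gcongr
  calc ‖g (ρ x) - h (ρ x)‖ ≤ C * (ψ (ρ x) / ‖p (ρ x)‖) := hgh (ρ x)
    _ ≤ C * (L * ψ x) := by gcongr
    _ = L * C * ψ x := by ring

end LinearFunctionalEquation

theorem stmt_16_general {S : Type*} {B : Type*} [NormedAddCommGroup B]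
    [NormedSpace ℂ B] [CompleteSpace B]
    (ρ : S → S) (p : S → ℂ) (hp : ∀ x : S, p x ≠ 0) (q : S → B)
    (ψ : S → ℝ)
    (L : ℝ) (hL0 : 0 < L) (hL1 : L < 1)
    (hψ : ∀ x : S, ψ (ρ x) ≤ L * ‖p (ρ x)‖ * ψ x)
    (f : S → B) (hf : ∀ x : S, ‖f (ρ x) - p x • f x - q x‖ ≤ ψ x) :
    ∃! T : S → B, (∀ x : S, T (ρ x) = p x • T x + q x) ∧
      (∀ x : S, ‖f x - T x‖ ≤ ψ x / ((1 - L) * ‖p x‖)) := by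
  have hfixed := (isWeightedContraction_linearFunEqOp (q := q) hp hψ).existsUnique_isFixedPt
    hL0.le hL1 (norm_linearFunEqOp_sub_self_le hp hf)
  refine (existsUnique_congr fun T => and_congr (isFixedPt_linearFunEqOp_iff hp) ?_).1 hfixed
  simp only [div_div, mul_comm]

theorem stmt_16 {S : Type*} [Nonempty S] {B : Type*} [NormedAddCommGroup B]
    [NormedSpace ℂ B] [CompleteSpace B]
    (ρ : S → S) (p : S → ℂ) (hp : ∀ x : S, p x ≠ 0) (q : S → B)
    (ψ : S → ℝ) (hψ0 : ∀ x : S, 0 ≤ ψ x)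
    (L : ℝ) (hL0 : 0 < L) (hL1 : L < 1)
    (hψ : ∀ x : S, ψ (ρ x) ≤ L * ‖p (ρ x)‖ * ψ x)
    (f : S → B) (hf : ∀ x : S, ‖f (ρ x) - p x • f x - q x‖ ≤ ψ x) :
    ∃! T : S → B, (∀ x : S, T (ρ x) = p x • T x + q x) ∧
      (∀ x : S, ‖f x - T x‖ ≤ ψ x / ((1 - L) * ‖p x‖)) :=
  stmt_16_general ρ p hp q ψ L hL0 hL1 hψ f hf
end

section
/- Let S be a nonempty set, B a complex Banach space, ρ : S → S a bijection, p : S → ℂ \ {0}, q : S → B, ψ : S → [0,∞), and 0 < L < 1 with |p(x)|·ψ(ρ⁻¹(x)) ≤ L·ψ(x) for all x ∈ S. If f : S → B satisfies ‖f(ρ(x)) − p(x)f(x) − q(x)‖ ≤ ψ(x) for all x ∈ S, then there exists a unique T : S → B with T(ρ(x)) = p(x)T(x) + q(x) and ‖f(x) − T(x)‖ ≤ ψ(ρ⁻¹(x))/(1−L) for all x ∈ S. -/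
/-!
Solutions of `T (ρ x) = p x • T x + q x` are the fixed points of the operator
`Λ g x = p (ρ⁻¹ x) • g (ρ⁻¹ x) + q (ρ⁻¹ x)`. The hypothesis on `ψ` makes `Λ` an `L`-contraction
for the weighted distance `inf {c | ‖g - h‖ ≤ c • ψ ∘ ρ⁻¹}`, and `f` is at distance at most `1`
from `Λ f`. Hence the iterates `Λⁿ f` converge pointwise (geometrically) to a fixed point `T`
within weighted distance `1 / (1 - L)` of `f`, and two fixed points at finite weighted distance
coincide.
-/

open Filter Topology

section AffineShift

variable {S 𝕜 B : Type*} [NormedField 𝕜] [NormedAddCommGroup B] [NormedSpace 𝕜 B]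

def affineShift (ρ : S ≃ S) (p : S → 𝕜) (q : S → B) (g : S → B) : S → B :=
  fun x => p (ρ.symm x) • g (ρ.symm x) + q (ρ.symm x)

variable {ρ : S ≃ S} {p : S → 𝕜} {q : S → B}

theorem affineShift_eq_self_iff {g : S → B} :
    affineShift ρ p q g = g ↔ ∀ x, g (ρ x) = p x • g x + q x := by
  refine ⟨fun h x => ?_, fun h => funext fun x => ?_⟩
  · simpa [affineShift] using (congrFun h (ρ x)).symm
  · simpa [affineShift] using (h (ρ.symm x)).symm

theorem norm_sub_affineShift_le {ψ : S → ℝ} {f : S → B}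
    (hf : ∀ x, ‖f (ρ x) - p x • f x - q x‖ ≤ ψ x) (x : S) :
    ‖f x - affineShift ρ p q f x‖ ≤ ψ (ρ.symm x) := by
  simpa [affineShift, sub_sub] using hf (ρ.symm x)

variable {ψ : S → ℝ} {L : ℝ}

theorem norm_affineShift_sub_le (hψ : ∀ x, ‖p x‖ * ψ (ρ.symm x) ≤ L * ψ x)
    {g h : S → B} {c : ℝ} (hc : 0 ≤ c) (hgh : ∀ y, ‖g y - h y‖ ≤ c * ψ (ρ.symm y)) (x : S) :
    ‖affineShift ρ p q g x - affineShift ρ p q h x‖ ≤ L * c * ψ (ρ.symm x) := by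
  set y := ρ.symm x
  have hsub : affineShift ρ p q g x - affineShift ρ p q h x = p y • (g y - h y) := by
    simp only [affineShift, smul_sub]
    abel
  calc ‖affineShift ρ p q g x - affineShift ρ p q h x‖ = ‖p y‖ * ‖g y - h y‖ := by
        rw [hsub, norm_smul]
    _ ≤ ‖p y‖ * (c * ψ (ρ.symm y)) := by gcongr; exact hgh y
    _ = c * (‖p y‖ * ψ (ρ.symm y)) := by ring
    _ ≤ c * (L * ψ y) := mul_le_mul_of_nonneg_left (hψ y) hc
    _ = L * c * ψ y := by ring

theorem norm_iterate_affineShift_sub_le (hψ : ∀ x, ‖p x‖ * ψ (ρ.symm x) ≤ L * ψ x)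
    (hL : 0 ≤ L) {g h : S → B} {c : ℝ} (hc : 0 ≤ c)
    (hgh : ∀ y, ‖g y - h y‖ ≤ c * ψ (ρ.symm y)) (n : ℕ) (x : S) :
    ‖(affineShift ρ p q)^[n] g x - (affineShift ρ p q)^[n] h x‖ ≤ L ^ n * c * ψ (ρ.symm x) := by
  induction n generalizing x with
  | zero => simpa using hgh x
  | succ n ih =>
    rw [Function.iterate_succ_apply', Function.iterate_succ_apply', pow_succ',
      mul_assoc L]
    exact norm_affineShift_sub_le hψ (by positivity) ih x

theorem eq_of_affineShift_eq_self (hψ : ∀ x, ‖p x‖ * ψ (ρ.symm x) ≤ L * ψ x)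
    (hL0 : 0 ≤ L) (hL1 : L < 1) {T T' : S → B} (hT : affineShift ρ p q T = T)
    (hT' : affineShift ρ p q T' = T') {c : ℝ} (hc : 0 ≤ c)
    (hTT' : ∀ y, ‖T y - T' y‖ ≤ c * ψ (ρ.symm y)) : T = T' := by
  funext x
  have hle : ∀ n : ℕ, ‖T x - T' x‖ ≤ L ^ n * c * ψ (ρ.symm x) := fun n => by
    have := norm_iterate_affineShift_sub_le (q := q) hψ hL0 hc hTT' n x
    rwa [Function.iterate_fixed hT, Function.iterate_fixed hT'] at this
  have hlim : Tendsto (fun n : ℕ => L ^ n * c * ψ (ρ.symm x)) atTop (𝓝 0) := by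
    simpa using ((tendsto_pow_atTop_nhds_zero_of_lt_one hL0 hL1).mul_const c).mul_const
      (ψ (ρ.symm x))
  exact sub_eq_zero.1 <| norm_le_zero_iff.1 <| ge_of_tendsto' hlim hle

theorem exists_affineShift_eq_self_near [CompleteSpace B]
    (hψ : ∀ x, ‖p x‖ * ψ (ρ.symm x) ≤ L * ψ x) (hL0 : 0 ≤ L) (hL1 : L < 1) {f : S → B}
    (hf : ∀ x, ‖f x - affineShift ρ p q f x‖ ≤ ψ (ρ.symm x)) :
    ∃ T, affineShift ρ p q T = T ∧ ∀ x, ‖f x - T x‖ ≤ ψ (ρ.symm x) / (1 - L) := by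
  set Λ := affineShift ρ p q
  have hdist : ∀ x n, dist (Λ^[n] f x) (Λ^[n + 1] f x) ≤ ψ (ρ.symm x) * L ^ n := fun x n => by
    rw [dist_eq_norm, mul_comm, ← mul_one (L ^ n), Function.iterate_succ_apply]
    exact norm_iterate_affineShift_sub_le hψ hL0 zero_le_one (by simpa using hf) n x
  choose T hT using fun x =>
    cauchySeq_tendsto_of_complete (cauchySeq_of_le_geometric L _ hL1 (hdist x))
  refine ⟨T, funext fun x => ?_, fun x => ?_⟩
  · have hshift : Tendsto (fun n => Λ (Λ^[n] f) x) atTop (𝓝 (T x)) := by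
      simp only [← Function.iterate_succ_apply' Λ]
      exact (hT x).comp (tendsto_add_atTop_nat 1)
    exact tendsto_nhds_unique
      (((hT (ρ.symm x)).const_smul (p (ρ.symm x))).add tendsto_const_nhds) hshift
  · simpa [dist_eq_norm] using dist_le_of_le_geometric_of_tendsto₀ L _ hL1 (hdist x) (hT x)

end AffineShift

theorem stmt_17_general {S : Type*} {B : Type*} [NormedAddCommGroup B]
    [NormedSpace ℂ B] [CompleteSpace B]
    (ρ : S ≃ S) (p : S → ℂ) (q : S → B)
    (ψ : S → ℝ)
    (L : ℝ) (hL0 : 0 < L) (hL1 : L < 1)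
    (hψ : ∀ x : S, ‖p x‖ * ψ (ρ.symm x) ≤ L * ψ x)
    (f : S → B) (hf : ∀ x : S, ‖f (ρ x) - p x • f x - q x‖ ≤ ψ x) :
    ∃! T : S → B, (∀ x : S, T (ρ x) = p x • T x + q x) ∧
      (∀ x : S, ‖f x - T x‖ ≤ ψ (ρ.symm x) / (1 - L)) := by
  obtain ⟨T, hT, hfT⟩ :=
    exists_affineShift_eq_self_near hψ hL0.le hL1 (norm_sub_affineShift_le hf)
  refine ⟨T, ⟨affineShift_eq_self_iff.1 hT, hfT⟩, fun T' ⟨hT', hfT'⟩ => ?_⟩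
  have hgap : 0 ≤ 1 - L := by linarith
  refine eq_of_affineShift_eq_self hψ hL0.le hL1 (affineShift_eq_self_iff.2 hT') hT
    (c := 2 / (1 - L)) (div_nonneg zero_le_two hgap) fun y => ?_
  calc ‖T' y - T y‖ ≤ ‖f y - T' y‖ + ‖f y - T y‖ := by
        simpa only [dist_eq_norm] using dist_triangle_left (T' y) (T y) (f y)
    _ ≤ ψ (ρ.symm y) / (1 - L) + ψ (ρ.symm y) / (1 - L) := add_le_add (hfT' y) (hfT y)
    _ = 2 / (1 - L) * ψ (ρ.symm y) := by ring

theorem stmt_17 {S : Type*} [Nonempty S] {B : Type*} [NormedAddCommGroup B]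
    [NormedSpace ℂ B] [CompleteSpace B]
    (ρ : S ≃ S) (p : S → ℂ) (hp : ∀ x : S, p x ≠ 0) (q : S → B)
    (ψ : S → ℝ) (hψ0 : ∀ x : S, 0 ≤ ψ x)
    (L : ℝ) (hL0 : 0 < L) (hL1 : L < 1)
    (hψ : ∀ x : S, ‖p x‖ * ψ (ρ.symm x) ≤ L * ψ x)
    (f : S → B) (hf : ∀ x : S, ‖f (ρ x) - p x • f x - q x‖ ≤ ψ x) :
    ∃! T : S → B, (∀ x : S, T (ρ x) = p x • T x + q x) ∧
      (∀ x : S, ‖f x - T x‖ ≤ ψ (ρ.symm x) / (1 - L)) :=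
  stmt_17_general ρ p q ψ L hL0 hL1 hψ f hf
end

section
/- Let S be a nonempty set, B a complex Banach space, ρ : S → S, p : S → ℂ \ {0}, q : S → B, with a ≤ |p(x)| for all x ∈ S and some real a > 1. Then for every δ > 0: any f : S → B satisfying ‖f(ρ(x)) − p(x)f(x) − q(x)‖ ≤ δ for all x ∈ S admits a unique T : S → B with T(ρ(x)) = p(x)T(x) + q(x) and ‖f(x) − T(x)‖ ≤ aδ/(a−1) for all x ∈ S. -/
/-!
Rewriting the equation as `T x = (p x)⁻¹ • (T (ρ x) - q x)` turns its solutions into the fixed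
points of a map on `S →ᵤ B` which, for the extended sup-distance, is a contraction with constant
`a⁻¹`. The inequality for `f` says that `f` is moved by at most `δ / a`, so the Banach fixed point
theorem yields a solution within `(δ / a) / (1 - a⁻¹) = δ / (a - 1)` of `f`, and any two fixed
points at finite distance from each other coincide.
-/

open scoped NNReal ENNReal UniformConvergence
open Function UniformFun

theorem ContractingWith.existsUnique_isFixedPt_edist_le {α : Type*} [EMetricSpace α]
    [CompleteSpace α] {K : ℝ≥0} {f : α → α} (hf : ContractingWith K f) (x : α) {C : ℝ≥0∞}
    (hC : edist x (f x) / (1 - K) ≤ C) (hC_top : C ≠ ∞) :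
    ∃! y, IsFixedPt f y ∧ edist x y ≤ C := by
  have hx : edist x (f x) ≠ ∞ := by
    intro h
    rw [h, ENNReal.top_div_of_ne_top (ENNReal.sub_ne_top ENNReal.one_ne_top)] at hC
    exact hC_top (top_le_iff.mp hC)
  refine ⟨efixedPoint f hf x hx, ⟨hf.efixedPoint_isFixedPt hx,
    (hf.edist_efixedPoint_le hx).trans hC⟩, fun y ⟨hy, hxy⟩ => ?_⟩
  refine (hf.eq_or_edist_eq_top_of_fixedPoints hy (hf.efixedPoint_isFixedPt hx)).resolve_right ?_
  refine ne_top_of_le_ne_top (ENNReal.add_ne_top.mpr ⟨hC_top, hC_top⟩) ?_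
  calc edist y (efixedPoint f hf x hx)
      ≤ edist x y + edist x (efixedPoint f hf x hx) := edist_triangle_left _ _ _
    _ ≤ C + C := add_le_add hxy ((hf.edist_efixedPoint_le hx).trans hC)

theorem ENNReal.ofReal_div_one_sub_inv {a ε : ℝ} (ha : 1 < a) :
    ENNReal.ofReal ε / (1 - Real.toNNReal a⁻¹) = ENNReal.ofReal (ε / (1 - a⁻¹)) := by
  have hK : (1 : ℝ≥0∞) - Real.toNNReal a⁻¹ = ENNReal.ofReal (1 - a⁻¹) := by
    rw [ENNReal.ofReal_sub _ (inv_nonneg.mpr (one_pos.trans ha).le), ENNReal.ofReal_one]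
    rfl
  rw [hK, ENNReal.ofReal_div_of_pos (sub_pos.mpr (inv_lt_one_of_one_lt₀ ha))]

section LinearFunctionalEquation

variable {S 𝕜 B : Type*} [NormedField 𝕜] [NormedAddCommGroup B] [NormedSpace 𝕜 B]

noncomputable def linearEqMap (ρ : S → S) (p : S → 𝕜) (q : S → B) (g : S →ᵤ B) : S →ᵤ B :=
  ofFun fun x => (p x)⁻¹ • (toFun g (ρ x) - q x)

theorem isFixedPt_linearEqMap_iff {ρ : S → S} {p : S → 𝕜} (hp : ∀ x, p x ≠ 0) {q : S → B}
    {T : S → B} :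
    IsFixedPt (linearEqMap ρ p q) (ofFun T) ↔ ∀ x, T (ρ x) = p x • T x + q x := by
  simp only [IsFixedPt, linearEqMap, toFun_ofFun, EmbeddingLike.apply_eq_iff_eq, funext_iff]
  refine forall_congr' fun x => ?_
  rw [inv_smul_eq_iff₀ (hp x), sub_eq_iff_eq_add]

theorem contractingWith_linearEqMap {ρ : S → S} {p : S → 𝕜} (q : S → B) {a : ℝ} (ha : 1 < a)
    (hpa : ∀ x, a ≤ ‖p x‖) :
    ContractingWith (Real.toNNReal a⁻¹) (linearEqMap ρ p q) := by
  have ha₀ : 0 < a := one_pos.trans ha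
  refine ⟨by simpa using inv_lt_one_of_one_lt₀ ha, lipschitzWith_ofFun_iff.mpr fun x => ?_⟩
  have hx : LipschitzWith ‖p x‖₊⁻¹ fun v : B => (p x)⁻¹ • (v - q x) :=
    .of_dist_le_mul fun v w => by rw [dist_smul₀, dist_sub_right, norm_inv]; rfl
  refine (hx.comp (lipschitzWith_eval (ρ x))).weaken ?_
  rw [mul_one, ← Real.toNNReal_coe (r := ‖p x‖₊⁻¹), NNReal.coe_inv, coe_nnnorm]
  exact Real.toNNReal_le_toNNReal (inv_anti₀ ha₀ (hpa x))

theorem edist_ofFun_le_ofReal {f g : S → B} {C : ℝ} (hC : 0 ≤ C) :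
    edist (ofFun f) (ofFun g) ≤ ENNReal.ofReal C ↔ ∀ x, ‖f x - g x‖ ≤ C := by
  simp only [UniformFun.edist_le, toFun_ofFun, edist_dist, dist_eq_norm,
    ENNReal.ofReal_le_ofReal_iff hC]

theorem edist_linearEqMap_le {ρ : S → S} {p : S → 𝕜} (hp : ∀ x, p x ≠ 0) {q : S → B} {a : ℝ}
    (ha : 0 < a) (hpa : ∀ x, a ≤ ‖p x‖) {δ : ℝ} (hδ : 0 ≤ δ) {f : S → B}
    (hf : ∀ x, ‖f (ρ x) - p x • f x - q x‖ ≤ δ) :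
    edist (ofFun f) (linearEqMap ρ p q (ofFun f)) ≤ ENNReal.ofReal (δ / a) := by
  refine (edist_ofFun_le_ofReal (by positivity)).mpr fun x => ?_
  have hdefect : f x - (p x)⁻¹ • (f (ρ x) - q x) = -((p x)⁻¹ • (f (ρ x) - p x • f x - q x)) := by
    rw [smul_sub, smul_sub, smul_sub, inv_smul_smul₀ (hp x)]
    abel
  calc ‖f x - (p x)⁻¹ • (f (ρ x) - q x)‖
      = ‖p x‖⁻¹ * ‖f (ρ x) - p x • f x - q x‖ := by rw [hdefect, norm_neg, norm_smul, norm_inv]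
    _ ≤ a⁻¹ * δ := by gcongr; exacts [hpa x, hf x]
    _ = δ / a := inv_mul_eq_div a δ

end LinearFunctionalEquation

theorem stmt_18_general {S : Type*} {B : Type*} [NormedAddCommGroup B]
    [NormedSpace ℂ B] [CompleteSpace B]
    (ρ : S → S) (p : S → ℂ) (hp : ∀ x : S, p x ≠ 0) (q : S → B)
    (a : ℝ) (ha : 1 < a) (hpa : ∀ x : S, a ≤ ‖p x‖)
    (δ : ℝ) (hδ : 0 < δ)
    (f : S → B) (hf : ∀ x : S, ‖f (ρ x) - p x • f x - q x‖ ≤ δ) :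
    ∃! T : S → B, (∀ x : S, T (ρ x) = p x • T x + q x) ∧
      (∀ x : S, ‖f x - T x‖ ≤ a * δ / (a - 1)) := by
  have ha₀ : 0 < a := one_pos.trans ha
  have hC₀ : 0 ≤ a * δ / (a - 1) := div_nonneg (by positivity) (sub_pos.mpr ha).le
  have hC : edist (ofFun f) (linearEqMap ρ p q (ofFun f)) / (1 - Real.toNNReal a⁻¹)
      ≤ ENNReal.ofReal (a * δ / (a - 1)) := calc
    _ ≤ ENNReal.ofReal (δ / a) / (1 - Real.toNNReal a⁻¹) :=
        ENNReal.div_le_div_right (edist_linearEqMap_le hp ha₀ hpa hδ.le hf) _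
    _ = ENNReal.ofReal (δ / (a - 1)) := by
        rw [ENNReal.ofReal_div_one_sub_inv ha]
        congr 1
        field_simp
    _ ≤ ENNReal.ofReal (a * δ / (a - 1)) := by
        gcongr
        exact le_mul_of_one_le_left hδ.le ha.le
  obtain ⟨T, ⟨hT, hfT⟩, hT_unique⟩ :=
    (contractingWith_linearEqMap q ha hpa).existsUnique_isFixedPt_edist_le _ hC
      ENNReal.ofReal_ne_top
  refine ⟨toFun T, ⟨(isFixedPt_linearEqMap_iff hp).mp hT, (edist_ofFun_le_ofReal hC₀).mp hfT⟩,
    fun T' ⟨hT'_eq, hfT'⟩ => congrArg toFun (hT_unique (ofFun T')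
      ⟨(isFixedPt_linearEqMap_iff hp).mpr hT'_eq, (edist_ofFun_le_ofReal hC₀).mpr hfT'⟩)⟩

theorem stmt_18 {S : Type*} [Nonempty S] {B : Type*} [NormedAddCommGroup B]
    [NormedSpace ℂ B] [CompleteSpace B]
    (ρ : S → S) (p : S → ℂ) (hp : ∀ x : S, p x ≠ 0) (q : S → B)
    (a : ℝ) (ha : 1 < a) (hpa : ∀ x : S, a ≤ ‖p x‖)
    (δ : ℝ) (hδ : 0 < δ)
    (f : S → B) (hf : ∀ x : S, ‖f (ρ x) - p x • f x - q x‖ ≤ δ) :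
    ∃! T : S → B, (∀ x : S, T (ρ x) = p x • T x + q x) ∧
      (∀ x : S, ‖f x - T x‖ ≤ a * δ / (a - 1)) :=
  stmt_18_general ρ p hp q a ha hpa δ hδ f hf
end

section
/- For every θ > 0 there is no constant δ ∈ [0,∞) such that every function f : ℝ → ℝ satisfying |f(2x) − 2f(x)| ≤ θ|x| for all x ∈ ℝ admits a function T : ℝ → ℝ with T(2x) = 2T(x) for all x and |f(x) − T(x)| ≤ δ|x| for all x ∈ ℝ. -/
/-!
The function `f x = θ/2 · x log₂ |x|` satisfies `f (2x) - 2 f x = θ x` exactly. A solution `T` of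
`T (2x) = 2 T x` has `T (2ⁿ) / 2ⁿ = T 1` for all `n`, so `|f - T| ≤ δ |x|` would keep
`f (2ⁿ) / 2ⁿ = θ n / 2` within `δ` of `T 1`, which fails for large `n`.
-/

open Real

noncomputable def mulLogbAbs (x : ℝ) : ℝ := x * logb 2 |x|

lemma mulLogbAbs_two_mul (x : ℝ) : mulLogbAbs (2 * x) = 2 * mulLogbAbs x + 2 * x := by
  rcases eq_or_ne x 0 with rfl | hx
  · simp [mulLogbAbs]
  · rw [mulLogbAbs, mulLogbAbs, abs_mul, abs_two,
      logb_mul two_ne_zero (abs_ne_zero.mpr hx), logb_self_eq_one one_lt_two]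
    ring

lemma mulLogbAbs_two_pow (n : ℕ) : mulLogbAbs (2 ^ n) = 2 ^ n * n := by
  rw [mulLogbAbs, abs_of_pos (by positivity), logb_pow, logb_self_eq_one one_lt_two, mul_one]

lemma map_two_pow_of_map_two_mul {T : ℝ → ℝ} (hT : ∀ x, T (2 * x) = 2 * T x) (n : ℕ) :
    T (2 ^ n) = 2 ^ n * T 1 := by
  induction n with
  | zero => simp
  | succ n ih => rw [pow_succ', hT, ih, mul_assoc]

lemma abs_div_two_pow_sub_le {f T : ℝ → ℝ} {δ : ℝ} (hT : ∀ x, T (2 * x) = 2 * T x)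
    (hfT : ∀ x, |f x - T x| ≤ δ * |x|) (n : ℕ) : |f (2 ^ n) / 2 ^ n - T 1| ≤ δ := by
  have hpos : (0 : ℝ) < 2 ^ n := by positivity
  have h := hfT (2 ^ n)
  rw [map_two_pow_of_map_two_mul hT, abs_of_pos hpos] at h
  rwa [← mul_div_cancel_left₀ (T 1) hpos.ne', ← sub_div, abs_div, abs_of_pos hpos,
    div_le_iff₀ hpos]

theorem stmt_19 (θ : ℝ) (hθ : 0 < θ) :
    ¬ ∃ δ : ℝ, 0 ≤ δ ∧ ∀ f : ℝ → ℝ,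
      (∀ x : ℝ, |f (2 * x) - 2 * f x| ≤ θ * |x|) →
      ∃ T : ℝ → ℝ, (∀ x : ℝ, T (2 * x) = 2 * T x) ∧
        (∀ x : ℝ, |f x - T x| ≤ δ * |x|) := by
  rintro ⟨δ, -, hall⟩
  obtain ⟨T, hT, hfT⟩ := hall (fun x => θ / 2 * mulLogbAbs x) fun x => by
    have hdefect : θ / 2 * mulLogbAbs (2 * x) - 2 * (θ / 2 * mulLogbAbs x) = θ * x := by
      rw [mulLogbAbs_two_mul]; ring
    rw [hdefect, abs_mul, abs_of_pos hθ]
  have hbound (n : ℕ) : |θ / 2 * n - T 1| ≤ δ := by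
    have h := abs_div_two_pow_sub_le hT hfT n
    rwa [mulLogbAbs_two_pow, mul_left_comm, mul_div_cancel_left₀ _ (by positivity)] at h
  obtain ⟨n, hn⟩ := exists_nat_gt ((δ + T 1) / (θ / 2))
  rw [div_lt_iff₀ (by positivity)] at hn
  linarith [le_abs_self (θ / 2 * n - T 1), hbound n]
end
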